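/- For every fault-tolerant facility location (FTFL) instance and every feasible solution (x, y, z) of the knapsack-cover-strengthened LP relaxation, there exists a feasible set S ⊆ F (with |{i ∈ S}| ≥ r_j for every client j) whose total cost ∑_{i∈S} f_i + ∑_{j∈C} w_j · (distance from j to its r_j-th closest facility in S) is at most 3.16 · (∑_{i∈F} f_i·y_i + ∑_{j∈C} w_j · ∑_{t=0}^{n−1} (1 − z_{jt})(c_{j(t+1)} − c_{jt})). -/

import Mathlib

open scoped BigOperators

/-- The distance `c_{jt}` from client `j` to its `t`-th closest facility (given by the
ordering `π`), with `c_{j0} = 0`. -/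
noncomputable def cDist {X : Type*} [MetricSpace X] (π : X → ℕ → X) (j : X) (t : ℕ) : ℝ :=
  if t = 0 then 0 else dist j (π j t)

/-- `N(j,t) = {π(j,1), …, π(j,t)}`, the set of the `t` closest facilities to `j`. -/
noncomputable def Nset {X : Type*} [MetricSpace X] [DecidableEq X]
    (π : X → ℕ → X) (j : X) (t : ℕ) : Finset X :=
  (Finset.Icc 1 t).image (π j)

/-!
Fix a threshold `β ∈ (0, 1]` and let `τ_j` be the first `t` with `β ≤ z_jt`. The knapsack-cover
constraint for `N(j, τ_j)` with `A = {i : β ≤ x_ij}` shows that the scaled opening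
`ŷ = min (y / β) 1` puts mass at least `r_j` on the ball `N(j, τ_j)` of radius `ρ_j = c_{jτ_j}`.
Going through the clients by increasing radius and, whenever one of them sees fewer than `r_j`
open facilities within `3 ρ_j`, opening the cheapest missing ones in its ball (paid for by
unused mass of `ŷ` there) gives a feasible `S` of cost at most `∑ f y / β + 3 ∑ w_j ρ_j`: a later
client whose ball meets `N(j, τ_j)` sees all of it within three times its own radius.
Averaged over `β` uniform on `[1/20, 1]`, this bound is at most
`20/19 · (log 20 · ∑ f y + 3 ∑_j w_j ∑_t (1 - z_jt)(c_{j,t+1} - c_jt)) ≤ 3.16 · LP`.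
-/

open Finset

section Rounding

variable {X : Type*}

theorem exists_subset_card_eq_forall_le [DecidableEq X] (f : X → ℝ) :
    ∀ (k : ℕ) (P : Finset X), k ≤ #P →
      ∃ T ⊆ P, #T = k ∧ ∀ i ∈ T, ∀ i' ∈ P \ T, f i ≤ f i'
  | 0, _, _ => ⟨∅, empty_subset _, rfl, by simp⟩
  | k + 1, P, hk => by
    obtain ⟨a, haP, hamin⟩ := exists_min_image P f (card_pos.mp (by omega))
    obtain ⟨T, hTP, hTk, hT⟩ :=
      exists_subset_card_eq_forall_le f k (P.erase a) (by rw [card_erase_of_mem haP]; omega)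
    have haT : a ∉ T := fun h => by simpa using hTP h
    refine ⟨insert a T, insert_subset haP (hTP.trans (erase_subset a P)), by
      rw [card_insert_of_notMem haT, hTk], ?_⟩
    intro i hi i' hi'
    simp only [mem_sdiff, mem_insert, not_or] at hi'
    rcases mem_insert.mp hi with rfl | hi
    · exact hamin i' hi'.1
    · exact hT i hi i' (by simp [hi'.1, hi'.2.1, hi'.2.2])

theorem sum_le_sum_mul_of_forall_le [DecidableEq X] {P T : Finset X} (hTP : T ⊆ P)
    {f δ : X → ℝ} {θ : ℝ} (hfT : ∀ i ∈ T, f i ≤ θ) (hfP : ∀ i ∈ P \ T, θ ≤ f i)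
    (hδ0 : ∀ i ∈ P \ T, 0 ≤ δ i) (hδ1 : ∀ i ∈ T, δ i ≤ 1) (hδ : ∑ i ∈ P, δ i = #T) :
    ∑ i ∈ T, f i ≤ ∑ i ∈ P, f i * δ i := by
  have hrest : θ * ∑ i ∈ P \ T, δ i ≤ ∑ i ∈ P \ T, f i * δ i := by
    rw [mul_sum]
    exact sum_le_sum fun i hi => mul_le_mul_of_nonneg_right (hfP i hi) (hδ0 i hi)
  have hcheap : ∑ i ∈ T, f i ≤ ∑ i ∈ T, f i * δ i + θ * ∑ i ∈ T, (1 - δ i) := by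
    rw [mul_sum, ← sum_add_distrib]
    refine sum_le_sum fun i hi => ?_
    nlinarith [hfT i hi, hδ1 i hi]
  have hT : ∑ i ∈ T, (1 - δ i) = ∑ i ∈ P \ T, δ i := by
    rw [sum_sub_distrib, sum_const, nsmul_one, ← hδ, ← sum_sdiff hTP]; ring
  rw [hT] at hcheap
  rw [← sum_sdiff hTP (f := fun i => f i * δ i)]
  linarith

theorem exists_extend_sum_eq [DecidableEq X] {P T : Finset X} (hTP : T ⊆ P) {a : X → ℝ}
    (ha0 : ∀ i ∈ P, 0 ≤ a i) (ha1 : ∀ i ∈ T, a i ≤ 1) (hmass : (#T : ℝ) ≤ ∑ i ∈ P, a i) :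
    ∃ δ : X → ℝ, (∀ i, 0 ≤ δ i) ∧ (∀ i ∈ P, δ i ≤ a i) ∧ (∀ i ∈ T, δ i = a i) ∧
      (∀ i ∉ P, δ i = 0) ∧ ∑ i ∈ P, δ i = #T := by
  -- keep `a` on `T` and scale it by `c ∈ [0, 1]` on `P \ T`
  set s := ∑ i ∈ P \ T, a i
  set m := (#T : ℝ) - ∑ i ∈ T, a i
  have hs : ∑ i ∈ T, a i + s = ∑ i ∈ P, a i := by rw [add_comm]; exact sum_sdiff hTP
  have hm0 : 0 ≤ m := by
    have := sum_le_sum ha1; simp only [sum_const, nsmul_eq_mul, mul_one] at this; linarith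
  have hs0 : 0 ≤ s := sum_nonneg fun i hi => ha0 i (sdiff_subset hi)
  have hms : m ≤ s := by linarith
  set c := m / s
  have hc0 : 0 ≤ c := div_nonneg hm0 hs0
  have hc1 : c ≤ 1 := div_le_one_of_le₀ hms hs0
  refine ⟨fun i => if i ∈ T then a i else if i ∈ P then c * a i else 0, ?_, ?_, ?_, ?_, ?_⟩
  · intro i
    dsimp only
    split_ifs with hT hP
    exacts [ha0 i (hTP hT), mul_nonneg hc0 (ha0 i hP), le_rfl]
  · intro i hi
    dsimp only
    split_ifs
    exacts [le_rfl, mul_le_of_le_one_left (ha0 i hi) hc1]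
  · intro i hi; simp [hi]
  · intro i hi; simp [hi, show i ∉ T from fun h => hi (hTP h)]
  · rw [← sum_sdiff hTP, sum_congr rfl fun i hi => if_pos hi,
      sum_congr rfl fun i hi => by rw [if_neg (mem_sdiff.mp hi).2, if_pos (mem_sdiff.mp hi).1],
      ← mul_sum, div_mul_cancel_of_imp fun h => le_antisymm (h ▸ hms) hm0]
    ring

/-- `u` is the part of the fractional opening `ŷ` used up so far; it pays for the opened
facilities `S`. -/
structure IsPartialRounding (F : Finset X) (f ŷ : X → ℝ) (S : Finset X) (u : X → ℝ) :
    Prop where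
  subset : S ⊆ F
  nonneg : ∀ i ∈ F, 0 ≤ u i
  le : ∀ i ∈ F, u i ≤ ŷ i
  eq_of_mem : ∀ i ∈ S, u i = ŷ i
  cost_le : ∑ i ∈ S, f i ≤ ∑ i ∈ F, f i * u i

theorem card_filter_union_of_forall [DecidableEq X] {S T : Finset X} (hST : Disjoint S T)
    {p : X → Prop} [DecidablePred p] (hT : ∀ i ∈ T, p i) :
    #{i ∈ S ∪ T | p i} = #{i ∈ S | p i} + #T := by
  rw [filter_union, card_union_of_disjoint (disjoint_filter_filter hST), filter_true_of_mem hT]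

namespace IsPartialRounding

variable {F S : Finset X} {f ŷ u : X → ℝ}

theorem empty (hŷ : ∀ i ∈ F, 0 ≤ ŷ i) : IsPartialRounding F f ŷ ∅ 0 where
  subset := empty_subset F
  nonneg _ _ := le_rfl
  le := hŷ
  eq_of_mem := by simp
  cost_le := by simp

theorem union_add [DecidableEq X] (h : IsPartialRounding F f ŷ S u) {T : Finset X}
    (hTF : T ⊆ F) (hST : Disjoint S T) {δ : X → ℝ} (hδ0 : ∀ i, 0 ≤ δ i)
    (hδ : ∀ i ∈ F, δ i ≤ ŷ i - u i) (hδT : ∀ i ∈ T, δ i = ŷ i - u i)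
    (hcost : ∑ i ∈ T, f i ≤ ∑ i ∈ F, f i * δ i) :
    IsPartialRounding F f ŷ (S ∪ T) (u + δ) where
  subset := union_subset h.subset hTF
  nonneg i hi := add_nonneg (h.nonneg i hi) (hδ0 i)
  le i hi := by have := hδ i hi; simp only [Pi.add_apply]; linarith
  eq_of_mem i hi := by
    rcases mem_union.mp hi with hS | hT
    · have := hδ i (h.subset hS); have := h.eq_of_mem i hS; have := hδ0 i
      simp only [Pi.add_apply]; linarith
    · simp [hδT i hT]
  cost_le := by
    simp only [sum_union hST, Pi.add_apply, mul_add, sum_add_distrib]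
    linarith [h.cost_le]

theorem exists_open [DecidableEq X] (h : IsPartialRounding F f ŷ S u)
    (hŷ : ∀ i ∈ F, ŷ i ≤ 1) {N : Finset X} (hNF : N ⊆ F) {k : ℕ} (hk : 0 < k)
    (hmass : (k : ℝ) ≤ ∑ i ∈ N, (ŷ i - u i)) :
    ∃ T ⊆ N, ∃ δ : X → ℝ, Disjoint S T ∧ #T = k ∧
      IsPartialRounding F f ŷ (S ∪ T) (u + δ) ∧ (∀ i, 0 ≤ δ i) ∧ (∀ i ∉ N, δ i = 0) ∧
      ∑ i ∈ N, δ i = k := by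
  set P := {i ∈ N | u i < ŷ i}
  have hPN : P ⊆ N := filter_subset _ _
  have hPF : P ⊆ F := hPN.trans hNF
  have ha0 : ∀ i ∈ F, 0 ≤ ŷ i - u i := fun i hi => sub_nonneg.mpr (h.le i hi)
  have ha1 : ∀ i ∈ F, ŷ i - u i ≤ 1 := fun i hi => by linarith [hŷ i hi, h.nonneg i hi]
  have hmassP : (k : ℝ) ≤ ∑ i ∈ P, (ŷ i - u i) := by
    rwa [sum_filter_of_ne fun i hi hne => sub_pos.mp ((ha0 i (hNF hi)).lt_of_ne hne.symm)]
  have hkP : k ≤ #P := by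
    have := sum_le_card_nsmul P (fun i => ŷ i - u i) 1 fun i hi => ha1 i (hPF hi)
    simp only [nsmul_eq_mul, mul_one] at this
    exact_mod_cast hmassP.trans this
  obtain ⟨T, hTP, hTk, hcheap⟩ := exists_subset_card_eq_forall_le f k P hkP
  obtain ⟨i₀, hi₀, hmax⟩ := exists_max_image T f (card_pos.mp (hTk ▸ hk))
  obtain ⟨δ, hδ0, hδle, hδT, hδP, hδsum⟩ := exists_extend_sum_eq hTP
    (fun i hi => ha0 i (hPF hi)) (fun i hi => ha1 i (hPF (hTP hi))) (hTk ▸ hmassP)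
  have hST : Disjoint S T := disjoint_right.mpr fun i hiT hiS => by
    have := (mem_filter.mp (hTP hiT)).2; rw [h.eq_of_mem i hiS] at this; exact lt_irrefl _ this
  have hδF : ∑ i ∈ F, f i * δ i = ∑ i ∈ P, f i * δ i :=
    (sum_subset hPF fun i _ hi => by rw [hδP i hi, mul_zero]).symm
  have hδN : ∑ i ∈ N, δ i = ∑ i ∈ P, δ i :=
    (sum_subset hPN fun i _ hi => hδP i hi).symm
  refine ⟨T, hTP.trans hPN, δ, hST, hTk, h.union_add (hTP.trans hPF) hST hδ0 ?_ hδT ?_, hδ0,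
    fun i hi => hδP i fun h => hi (hPN h), by rw [hδN, hδsum, hTk]⟩
  · intro i hi
    by_cases hiP : i ∈ P
    · exact hδle i hiP
    · rw [hδP i hiP]; exact ha0 i hi
  · rw [hδF]
    exact sum_le_sum_mul_of_forall_le hTP hmax
      (fun i hi => hcheap i₀ hi₀ i hi) (fun i _ => hδ0 i) (fun i hi => (hδle i (hTP hi)).trans
        (ha1 i (hPF (hTP hi)))) hδsum

end IsPartialRounding

section Metric

variable [PseudoMetricSpace X] [DecidableEq X]

theorem sum_add_le_card_filter_union {S T N N' : Finset X} {u δ : X → ℝ} {j j' : X}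
    {ρ ρ' : ℝ} (hST : Disjoint S T) (hTN : T ⊆ N) (hN : ∀ i ∈ N, dist j i ≤ ρ)
    (hN' : ∀ i ∈ N', dist j' i ≤ ρ') (hρ : ρ ≤ ρ') (hδ0 : ∀ i, 0 ≤ δ i)
    (hδN : ∀ i ∉ N, δ i = 0) (hδ : ∑ i ∈ N, δ i ≤ #T)
    (hu : ∑ i ∈ N', u i ≤ #{i ∈ S | dist j' i ≤ 3 * ρ'}) :
    ∑ i ∈ N', (u + δ) i ≤ #{i ∈ S ∪ T | dist j' i ≤ 3 * ρ'} := by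
  simp only [Pi.add_apply, sum_add_distrib]
  by_cases hmeet : ∃ p ∈ N', p ∈ N
  · obtain ⟨p, hpN', hpN⟩ := hmeet
    -- two hops through `p` put all of `N` within `ρ' + 2ρ ≤ 3ρ'` of `j'`
    have hT : ∀ i ∈ T, dist j' i ≤ 3 * ρ' := fun i hi => by
      linarith [dist_triangle4 j' p j i, hN' p hpN', dist_comm p j ▸ hN p hpN, hN i (hTN hi)]
    have hδN' : ∑ i ∈ N', δ i ≤ ∑ i ∈ N, δ i := by
      calc ∑ i ∈ N', δ i ≤ ∑ i ∈ N' ∪ N, δ i :=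
            sum_le_sum_of_subset_of_nonneg subset_union_left fun i _ _ => hδ0 i
        _ = ∑ i ∈ N, δ i := (sum_subset subset_union_right fun i _ hi => hδN i hi).symm
    rw [card_filter_union_of_forall hST hT]
    push_cast
    linarith
  · simp only [not_exists, not_and] at hmeet
    have : ∑ i ∈ N', δ i = 0 := sum_eq_zero fun i hi => hδN i (hmeet i hi)
    have hmono : #{i ∈ S | dist j' i ≤ 3 * ρ'} ≤ #{i ∈ S ∪ T | dist j' i ≤ 3 * ρ'} :=
      card_le_card (filter_subset_filter _ subset_union_left)
    rw [this, add_zero]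
    exact hu.trans (by exact_mod_cast hmono)

namespace IsPartialRounding

variable {F S : Finset X} {f ŷ u : X → ℝ}

theorem exists_serve (h : IsPartialRounding F f ŷ S u) (hŷ : ∀ i ∈ F, ŷ i ≤ 1)
    {N : Finset X} (hNF : N ⊆ F) {j : X} {ρ : ℝ} (hN : ∀ i ∈ N, dist j i ≤ ρ) {r : ℕ}
    (hmass : (r : ℝ) ≤ ∑ i ∈ N, ŷ i) (hu : ∑ i ∈ N, u i ≤ #{i ∈ S | dist j i ≤ 3 * ρ}) :
    ∃ S' u', IsPartialRounding F f ŷ S' u' ∧ S ⊆ S' ∧ r ≤ #{i ∈ S' | dist j i ≤ 3 * ρ} ∧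
      ∀ (j' : X) (ρ' : ℝ) (N' : Finset X), ρ ≤ ρ' → (∀ i ∈ N', dist j' i ≤ ρ') →
        ∑ i ∈ N', u i ≤ #{i ∈ S | dist j' i ≤ 3 * ρ'} →
        ∑ i ∈ N', u' i ≤ #{i ∈ S' | dist j' i ≤ 3 * ρ'} := by
  set a := #{i ∈ S | dist j i ≤ 3 * ρ}
  by_cases hr : r ≤ a
  · exact ⟨S, u, h, subset_rfl, hr, fun _ _ _ _ _ h => h⟩
  have hk : ((r - a : ℕ) : ℝ) ≤ ∑ i ∈ N, (ŷ i - u i) := by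
    rw [Nat.cast_sub (by omega), sum_sub_distrib]; linarith
  obtain ⟨T, hTN, δ, hST, hTk, h', hδ0, hδN, hδ⟩ := h.exists_open hŷ hNF (by omega) hk
  refine ⟨S ∪ T, u + δ, h', subset_union_left, ?_, fun j' ρ' N' hρ hN' hu' =>
    sum_add_le_card_filter_union hST hTN hN hN' hρ hδ0 hδN (by rw [hδ, hTk]) hu'⟩
  have hT : ∀ i ∈ T, dist j i ≤ 3 * ρ := fun i hi => by
    linarith [hN i (hTN hi), dist_nonneg (x := j) (y := i)]
  rw [card_filter_union_of_forall hST hT]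
  omega

theorem exists_serve_all (h : IsPartialRounding F f ŷ S u) (hŷ : ∀ i ∈ F, ŷ i ≤ 1)
    {C : Finset X} {ρ : X → ℝ} {N : X → Finset X} {r : X → ℕ} (hNF : ∀ j ∈ C, N j ⊆ F)
    (hN : ∀ j ∈ C, ∀ i ∈ N j, dist j i ≤ ρ j) (hmass : ∀ j ∈ C, (r j : ℝ) ≤ ∑ i ∈ N j, ŷ i)
    (hu : ∀ j ∈ C, ∑ i ∈ N j, u i ≤ #{i ∈ S | dist j i ≤ 3 * ρ j}) :
    ∃ S' u', IsPartialRounding F f ŷ S' u' ∧ S ⊆ S' ∧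
      ∀ j ∈ C, r j ≤ #{i ∈ S' | dist j i ≤ 3 * ρ j} := by
  induction C using induction_on_min_value ρ generalizing S u with
  | empty => exact ⟨S, u, h, subset_rfl, by simp⟩
  | insert j C hj hmin ih =>
    obtain ⟨S₁, u₁, h₁, hSS₁, hr₁, htransfer⟩ := h.exists_serve hŷ (hNF j (mem_insert_self j C))
      (hN j (mem_insert_self j C)) (hmass j (mem_insert_self j C)) (hu j (mem_insert_self j C))
    obtain ⟨S', u', h', hS₁S', hr'⟩ := ih h₁ (fun j' hj' => hNF j' (mem_insert_of_mem hj'))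
      (fun j' hj' => hN j' (mem_insert_of_mem hj')) (fun j' hj' => hmass j' (mem_insert_of_mem hj'))
      (fun j' hj' => htransfer j' (ρ j') (N j') (hmin j' hj') (hN j' (mem_insert_of_mem hj'))
        (hu j' (mem_insert_of_mem hj')))
    refine ⟨S', u', h', hSS₁.trans hS₁S', (forall_mem_insert _ _ _).mpr ⟨?_, hr'⟩⟩
    exact hr₁.trans (card_le_card (filter_subset_filter _ hS₁S'))

end IsPartialRounding

theorem exists_integral_rounding {F : Finset X} {f ŷ : X → ℝ} (hf : ∀ i ∈ F, 0 ≤ f i)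
    (hŷ0 : ∀ i ∈ F, 0 ≤ ŷ i) (hŷ1 : ∀ i ∈ F, ŷ i ≤ 1) {C : Finset X} {ρ : X → ℝ}
    {N : X → Finset X} {r : X → ℕ} (hNF : ∀ j ∈ C, N j ⊆ F)
    (hN : ∀ j ∈ C, ∀ i ∈ N j, dist j i ≤ ρ j) (hmass : ∀ j ∈ C, (r j : ℝ) ≤ ∑ i ∈ N j, ŷ i) :
    ∃ S ⊆ F, ∑ i ∈ S, f i ≤ ∑ i ∈ F, f i * ŷ i ∧
      ∀ j ∈ C, r j ≤ #{i ∈ S | dist j i ≤ 3 * ρ j} := by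
  obtain ⟨S, u, h, -, hr⟩ := (IsPartialRounding.empty (f := f) hŷ0).exists_serve_all hŷ1
    hNF hN hmass fun j _ => by simp
  refine ⟨S, h.subset, h.cost_le.trans (sum_le_sum fun i hi => ?_), hr⟩
  exact mul_le_mul_of_nonneg_left (h.le i hi) (hf i hi)

end Metric

end Rounding

theorem List.Pairwise.getD_le_of_lt_countP {l : List ℝ} (hl : l.Pairwise (· ≤ ·)) {R : ℝ}
    {k : ℕ} (hk : k < l.countP (· ≤ R)) (d : ℝ) : l.getD k d ≤ R := by
  induction l generalizing k with
  | nil => simp at hk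
  | cons a l ih =>
    rw [List.pairwise_cons] at hl
    cases k with
    | zero =>
      obtain ⟨b, hb, hbR⟩ := List.countP_pos_iff.mp hk
      simp only [decide_eq_true_eq] at hbR
      rcases List.mem_cons.mp hb with rfl | hb
      · simpa using hbR
      · simpa using (hl.1 b hb).trans hbR
    | succ k =>
      rw [List.countP_cons] at hk
      simpa using ih hl.2 (by split_ifs at hk <;> omega)

theorem sort_map_getD_le_of_le_card_filter {X : Type*} (S : Finset X) (g : X → ℝ) {R : ℝ}
    {r : ℕ} (hr : 1 ≤ r) (h : r ≤ #{i ∈ S | g i ≤ R}) :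
    ((S.val.map g).sort (· ≤ ·)).getD (r - 1) 0 ≤ R := by
  refine (Multiset.pairwise_sort _ _).getD_le_of_lt_countP ?_ 0
  have : (((S.val.map g).sort (· ≤ ·)).countP (· ≤ R)) = #{i ∈ S | g i ≤ R} := by
    rw [← Multiset.coe_countP, Multiset.sort_eq, Multiset.countP_map]
    rfl
  omega

section Threshold

open Classical in
noncomputable def threshold (z : ℕ → ℝ) (n : ℕ) (β : ℝ) : ℕ :=
  Nat.find (⟨n, .inl le_rfl⟩ : ∃ t, n ≤ t ∨ β ≤ z t)

variable {z : ℕ → ℝ} {n : ℕ} {β : ℝ}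

theorem threshold_le : threshold z n β ≤ n :=
  Nat.find_min' _ (.inl le_rfl)

theorem le_apply_threshold (h : β ≤ z n) : β ≤ z (threshold z n β) := by
  classical
  rcases Nat.find_spec (⟨n, .inl le_rfl⟩ : ∃ t, n ≤ t ∨ β ≤ z t) with hn | hβ
  · rwa [threshold, le_antisymm (Nat.find_min' _ (.inl le_rfl)) hn]
  · exact hβ

theorem apply_lt_of_lt_threshold {t : ℕ} (ht : t < threshold z n β) : z t < β := by
  classical
  exact lt_of_not_ge fun h => Nat.find_min _ ht (.inr h)

theorem threshold_pos (h0 : z 0 < β) (hn : β ≤ z n) : 0 < threshold z n β :=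
  Nat.pos_of_ne_zero fun h => (le_apply_threshold hn).not_gt (h ▸ h0)

theorem apply_threshold_sub_le {c : ℕ → ℝ} (hc : ∀ t < n, c t ≤ c (t + 1)) :
    c (threshold z n β) - c 0 ≤ ∑ t ∈ range n, if z t < β then c (t + 1) - c t else 0 := by
  rw [← sum_range_sub]
  calc ∑ t ∈ range (threshold z n β), (c (t + 1) - c t)
      = ∑ t ∈ range (threshold z n β), if z t < β then c (t + 1) - c t else 0 :=
        sum_congr rfl fun t ht => (if_pos (apply_lt_of_lt_threshold (mem_range.mp ht))).symm
    _ ≤ _ := by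
        refine sum_le_sum_of_subset_of_nonneg (range_subset_range.mpr threshold_le)
          fun t ht _ => ?_
        split_ifs
        exacts [sub_nonneg.mpr (hc t (mem_range.mp ht)), le_rfl]

end Threshold

theorem Finset.exists_strictMonoOn_enum {α : Type*} [LinearOrder α] (V : Finset α)
    (hV : V.Nonempty) : ∃ (M : ℕ) (b : ℕ → α), StrictMonoOn b (Set.Iic M) ∧
      b 0 = V.min' hV ∧ b M = V.max' hV ∧ ∀ v ∈ V, ∃ l ≤ M, b l = v := by
  have hpos : 0 < #V := card_pos.mpr hV
  let b : ℕ → α := fun l => V.orderEmbOfFin rfl ⟨min l (#V - 1), by omega⟩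
  have hb : ∀ l (hl : l ≤ #V - 1), b l = V.orderEmbOfFin rfl ⟨l, by omega⟩ := fun l hl => by
    simp only [b, min_eq_left hl]
  refine ⟨#V - 1, b, fun l hl l' hl' hll' => ?_, ?_, ?_, fun v hv => ?_⟩
  · rw [hb l hl, hb l' hl']
    exact (V.orderEmbOfFin rfl).strictMono (Fin.mk_lt_mk.mpr hll')
  · rw [hb 0 (Nat.zero_le _), orderEmbOfFin_zero rfl hpos]
  · rw [hb _ le_rfl, orderEmbOfFin_last rfl hpos]
  · obtain ⟨⟨l, hl⟩, rfl⟩ : v ∈ Set.range (V.orderEmbOfFin rfl) := by simpa using hv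
    exact ⟨l, by omega, hb l (by omega)⟩

theorem exists_breakpoints (Z : Finset ℝ) {a c : ℝ} (hac : a ≤ c) (hZ : ∀ v ∈ Z, v ≤ c) :
    ∃ (M : ℕ) (b : ℕ → ℝ), StrictMonoOn b (Set.Iic M) ∧ b 0 = a ∧ b M = c ∧
      ∀ v ∈ Z, ∀ l < M, v < b (l + 1) → v ≤ b l := by
  set V := insert a (insert c {v ∈ Z | a ≤ v})
  have hV : ∀ v ∈ V, a ≤ v ∧ v ≤ c := by
    simp only [V, mem_insert, mem_filter]
    rintro v (rfl | rfl | ⟨hv, hav⟩)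
    exacts [⟨le_rfl, hac⟩, ⟨hac, le_rfl⟩, ⟨hav, hZ v hv⟩]
  have haV : a ∈ V := mem_insert_self _ _
  obtain ⟨M, b, hb, hb0, hbM, hVb⟩ := V.exists_strictMonoOn_enum ⟨a, haV⟩
  rw [le_antisymm (min'_le V a haV) (le_min' V _ _ fun v hv => (hV v hv).1)] at hb0
  rw [le_antisymm (max'_le V _ _ fun v hv => (hV v hv).2)
    (le_max' V c (mem_insert_of_mem (mem_insert_self _ _)))] at hbM
  refine ⟨M, b, hb, hb0, hbM, fun v hv l hl hlt => ?_⟩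
  by_cases hva : v < a
  · exact hva.le.trans (hb0 ▸ hb.monotoneOn (Set.mem_Iic.mpr (Nat.zero_le M))
      (Set.mem_Iic.mpr hl.le) (Nat.zero_le l))
  obtain ⟨i, hi, rfl⟩ := hVb v (mem_insert_of_mem (mem_insert_of_mem
    (mem_filter.mpr ⟨hv, not_lt.mp hva⟩)))
  have := (hb.lt_iff_lt (Set.mem_Iic.mpr hi) (Set.mem_Iic.mpr hl)).mp hlt
  exact hb.monotoneOn (Set.mem_Iic.mpr hi) (Set.mem_Iic.mpr hl.le) (by omega)

section Breakpoints

variable {b : ℕ → ℝ} {M : ℕ}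

theorem sum_ite_lt_sub_le (hb : ∀ l < M, b l ≤ b (l + 1)) {v : ℝ}
    (hv : ∀ l < M, v < b (l + 1) → v ≤ b l) (hvM : v ≤ b M) :
    ∑ l ∈ range M, (if v < b (l + 1) then b (l + 1) - b l else 0) ≤ b M - v := by
  calc ∑ l ∈ range M, (if v < b (l + 1) then b (l + 1) - b l else 0)
      ≤ ∑ l ∈ range M, (max (b (l + 1) - v) 0 - max (b l - v) 0) := by
        refine sum_le_sum fun l hl => ?_
        have hbl := hb l (mem_range.mp hl)
        split_ifs with h
        · have := hv l (mem_range.mp hl) h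
          rw [max_eq_left (by linarith), max_eq_left (by linarith)]; linarith
        · rw [max_eq_right (by linarith), max_eq_right (by linarith)]; simp
    _ = max (b M - v) 0 - max (b 0 - v) 0 := sum_range_sub (fun l => max (b l - v) 0) M
    _ ≤ b M - v := by rw [max_eq_left (by linarith)]; linarith [le_max_right (b 0 - v) 0]

theorem sum_sub_div_le_log_sub (hb : ∀ l ≤ M, 0 < b l) :
    ∑ l ∈ range M, (b (l + 1) - b l) / b (l + 1) ≤ Real.log (b M) - Real.log (b 0) := by
  rw [← sum_range_sub (fun l => Real.log (b l))]
  refine sum_le_sum fun l hl => ?_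
  have h0 := hb l (by simp at hl; omega)
  have h1 := hb (l + 1) (by simp at hl; omega)
  have key := Real.log_le_sub_one_of_pos (div_pos h0 h1)
  rw [Real.log_div h0.ne' h1.ne'] at key
  rw [sub_div, div_self h1.ne']
  linarith

theorem sum_mul_apply_threshold_sub_le (hb : ∀ l < M, b l ≤ b (l + 1)) (hbM : b M = 1)
    {z c : ℕ → ℝ} {n : ℕ} (hc : ∀ t < n, c t ≤ c (t + 1)) (hz : ∀ t < n, z t ≤ 1)
    (hgap : ∀ t < n, ∀ l < M, z t < b (l + 1) → z t ≤ b l) :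
    ∑ l ∈ range M, (b (l + 1) - b l) * (c (threshold z n (b (l + 1))) - c 0) ≤
      ∑ t ∈ range n, (1 - z t) * (c (t + 1) - c t) := by
  calc _ ≤ ∑ l ∈ range M, (b (l + 1) - b l) *
        ∑ t ∈ range n, (if z t < b (l + 1) then c (t + 1) - c t else 0) :=
        sum_le_sum fun l hl => mul_le_mul_of_nonneg_left (apply_threshold_sub_le hc)
          (sub_nonneg.mpr (hb l (mem_range.mp hl)))
    _ = ∑ t ∈ range n, (∑ l ∈ range M, if z t < b (l + 1) then b (l + 1) - b l else 0) *
        (c (t + 1) - c t) := by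
        simp_rw [mul_sum, sum_mul]
        rw [sum_comm]
        refine sum_congr rfl fun t _ => sum_congr rfl fun l _ => ?_
        split_ifs <;> ring
    _ ≤ _ := sum_le_sum fun t ht => mul_le_mul_of_nonneg_right
        (hbM ▸ sum_ite_lt_sub_le hb (hgap t (mem_range.mp ht)) (hbM ▸ hz t (mem_range.mp ht)))
        (sub_nonneg.mpr (hc t (mem_range.mp ht)))

end Breakpoints

theorem Real.log_twenty_le_three : Real.log 20 ≤ 3 := by
  rw [Real.log_le_iff_le_exp (by norm_num), show (3 : ℝ) = (3 : ℕ) by norm_num,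
    ← Real.exp_one_pow]
  calc (20 : ℝ) ≤ 2.7182818283 ^ 3 := by norm_num
    _ ≤ Real.exp 1 ^ 3 := pow_le_pow_left₀ (by norm_num) Real.exp_one_gt_d9.le 3

section Averaging

variable {ι : Type*} {C : Finset ι} {w : ι → ℝ} {c z : ι → ℕ → ℝ} {n : ℕ} {A : ℝ}

theorem sum_mul_cost_at_threshold_le {b : ℕ → ℝ} {M : ℕ} (hw : ∀ j ∈ C, 0 ≤ w j)
    (hc0 : ∀ j ∈ C, c j 0 = 0) (hc : ∀ j ∈ C, ∀ t < n, c j t ≤ c j (t + 1))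
    (hz : ∀ j ∈ C, ∀ t < n, z j t ≤ 1) (hA : 0 ≤ A) (hb : ∀ l < M, b l ≤ b (l + 1))
    (hbpos : ∀ l ≤ M, 0 < b l) (hb0 : b 0 = 1 / 20) (hbM : b M = 1)
    (hgap : ∀ j ∈ C, ∀ t < n, ∀ l < M, z j t < b (l + 1) → z j t ≤ b l) :
    ∑ l ∈ range M, (b (l + 1) - b l) *
        (A / b (l + 1) + 3 * ∑ j ∈ C, w j * c j (threshold (z j) n (b (l + 1)))) ≤
      3 * (A + ∑ j ∈ C, w j * ∑ t ∈ range n, (1 - z j t) * (c j (t + 1) - c j t)) := by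
  have hfac : ∑ l ∈ range M, (b (l + 1) - b l) * (A / b (l + 1)) ≤ 3 * A := by
    calc _ = A * ∑ l ∈ range M, (b (l + 1) - b l) / b (l + 1) := by
          rw [mul_sum]; exact sum_congr rfl fun l _ => by ring
      _ ≤ A * Real.log 20 := by
          refine mul_le_mul_of_nonneg_left ((sum_sub_div_le_log_sub hbpos).trans_eq ?_) hA
          rw [hbM, hb0, Real.log_one, one_div, Real.log_inv]; ring
      _ ≤ 3 * A := by nlinarith [Real.log_twenty_le_three]
  have hconn : ∑ l ∈ range M, (b (l + 1) - b l) *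
        ∑ j ∈ C, w j * c j (threshold (z j) n (b (l + 1))) ≤
      ∑ j ∈ C, w j * ∑ t ∈ range n, (1 - z j t) * (c j (t + 1) - c j t) := by
    calc _ = ∑ j ∈ C, w j * ∑ l ∈ range M,
          (b (l + 1) - b l) * (c j (threshold (z j) n (b (l + 1))) - c j 0) := by
          simp_rw [mul_sum]
          rw [sum_comm]
          refine sum_congr rfl fun j hj => sum_congr rfl fun l _ => ?_
          rw [hc0 j hj]; ring
      _ ≤ _ := sum_le_sum fun j hj => mul_le_mul_of_nonneg_left
          (sum_mul_apply_threshold_sub_le hb hbM (hc j hj) (hz j hj) (hgap j hj)) (hw j hj)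
  simp only [mul_add, sum_add_distrib]
  simp only [mul_left_comm _ (3 : ℝ), ← mul_sum]
  linarith

/-- The average over `β ∈ [1/20, 1]` is a finite sum over the breakpoints `z_jt`, between
which `threshold` is constant; it is at most `3 LP`, and `3 · 20/19 ≤ 3.16`. -/
theorem exists_threshold_le (hw : ∀ j ∈ C, 0 ≤ w j) (hc0 : ∀ j ∈ C, c j 0 = 0)
    (hc : ∀ j ∈ C, ∀ t < n, c j t ≤ c j (t + 1)) (hz : ∀ j ∈ C, ∀ t < n, z j t ≤ 1)
    (hA : 0 ≤ A) : ∃ β, 1 / 20 ≤ β ∧ β ≤ 1 ∧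
      A / β + 3 * ∑ j ∈ C, w j * c j (threshold (z j) n β) ≤
        3.16 * (A + ∑ j ∈ C, w j * ∑ t ∈ range n, (1 - z j t) * (c j (t + 1) - c j t)) := by
  set LP := A + ∑ j ∈ C, w j * ∑ t ∈ range n, (1 - z j t) * (c j (t + 1) - c j t)
  have hLP : 0 ≤ LP := add_nonneg hA <| sum_nonneg fun j hj => mul_nonneg (hw j hj) <|
    sum_nonneg fun t ht => mul_nonneg (by linarith [hz j hj t (mem_range.mp ht)])
      (sub_nonneg.mpr (hc j hj t (mem_range.mp ht)))
  obtain ⟨M, b, hbmono, hb0, hbM, hgap⟩ :=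
    exists_breakpoints ((C ×ˢ range n).image fun p => z p.1 p.2) (a := 1 / 20) (c := 1)
      (by norm_num) fun v hv => by
        obtain ⟨⟨j, t⟩, hjt, rfl⟩ := mem_image.mp hv
        exact hz j (mem_product.mp hjt).1 t (mem_range.mp (mem_product.mp hjt).2)
  have hb : ∀ l < M, b l < b (l + 1) := fun l hl =>
    hbmono (Set.mem_Iic.mpr hl.le) (Set.mem_Iic.mpr hl) (Nat.lt_succ_self l)
  have hbge : ∀ l ≤ M, 1 / 20 ≤ b l := fun l hl =>
    hb0 ▸ hbmono.monotoneOn (Set.mem_Iic.mpr (Nat.zero_le M)) (Set.mem_Iic.mpr hl) (Nat.zero_le l)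
  have hM : 0 < M := Nat.pos_of_ne_zero fun h => by subst h; norm_num [hb0] at hbM
  obtain ⟨l, hl, hle⟩ := exists_le_of_sum_le (nonempty_range_iff.mpr hM.ne')
    (f := fun l => (b (l + 1) - b l) *
      (A / b (l + 1) + 3 * ∑ j ∈ C, w j * c j (threshold (z j) n (b (l + 1)))))
    (g := fun l => (b (l + 1) - b l) * (3.16 * LP)) <| by
      refine (sum_mul_cost_at_threshold_le hw hc0 hc hz hA (fun l hl => (hb l hl).le)
        (fun l hl => by linarith [hbge l hl]) hb0 hbM fun j hj t ht =>
          hgap _ (mem_image_of_mem (fun p => z p.1 p.2) (a := (j, t))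
            (mem_product.mpr ⟨hj, mem_range.mpr ht⟩))).trans ?_
      rw [← sum_mul, sum_range_sub, hbM, hb0]; linarith
  have hl := mem_range.mp hl
  exact ⟨b (l + 1), hbge _ hl, hbM ▸ hbmono.monotoneOn (Set.mem_Iic.mpr hl)
    (Set.mem_Iic.mpr le_rfl) hl, le_of_mul_le_mul_left hle (sub_pos.mpr (hb l hl))⟩

end Averaging

theorem le_sum_min_div_of_knapsackCover {X : Type*} [DecidableEq X] {N : Finset X}
    {x y : X → ℝ} {r : ℕ} {β ζ : ℝ} (hβ : 0 < β) (hβζ : β ≤ ζ) (hy : ∀ i ∈ N, 0 ≤ y i)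
    (hxy : ∀ i ∈ N, x i ≤ y i) (hkc : ∀ A ⊆ N, ((r : ℝ) - #A) * ζ ≤ ∑ i ∈ N \ A, x i) :
    (r : ℝ) ≤ ∑ i ∈ N, min (y i / β) 1 := by
  set A := {i ∈ N | β ≤ x i}
  have hAN : A ⊆ N := filter_subset _ _
  have hA : ∑ i ∈ A, min (y i / β) 1 = #A := by
    rw [sum_congr rfl fun i hi => min_eq_right ((one_le_div hβ).mpr ?_)]
    · simp
    · obtain ⟨hiN, hxi⟩ := mem_filter.mp hi
      exact hxi.trans (hxy i hiN)
  have hrest : (r : ℝ) - #A ≤ ∑ i ∈ N \ A, min (y i / β) 1 := by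
    by_cases hr : (r : ℝ) - #A ≤ 0
    · exact hr.trans (sum_nonneg fun i hi =>
        le_min (div_nonneg (hy i (sdiff_subset hi)) hβ.le) zero_le_one)
    have hx : ∀ i ∈ N \ A, x i ≤ β * min (y i / β) 1 := fun i hi => by
      obtain ⟨hiN, hiA⟩ := mem_sdiff.mp hi
      rw [mul_min_of_nonneg _ _ hβ.le, mul_div_cancel₀ _ hβ.ne', mul_one]
      exact le_min (hxy i hiN) (not_le.mp fun h => hiA (mem_filter.mpr ⟨hiN, h⟩)).le
    rw [← mul_le_mul_iff_of_pos_left hβ, mul_sum, mul_comm]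
    calc ((r : ℝ) - #A) * β ≤ ((r : ℝ) - #A) * ζ :=
          mul_le_mul_of_nonneg_left hβζ (not_le.mp hr).le
      _ ≤ _ := (hkc A hAN).trans (sum_le_sum hx)
  rw [← sum_sdiff hAN]
  linarith

section FTFL

variable {X : Type*} [MetricSpace X] {π : X → ℕ → X} {j : X} {n : ℕ}

theorem cDist_zero : cDist π j 0 = 0 := if_pos rfl

theorem cDist_le_succ (hsorted : ∀ t t' : ℕ, 1 ≤ t → t ≤ t' → t' ≤ n →
      dist j (π j t) ≤ dist j (π j t')) {t : ℕ} (ht : t < n) :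
    cDist π j t ≤ cDist π j (t + 1) := by
  rcases Nat.eq_zero_or_pos t with rfl | ht0
  · simp only [cDist, if_neg (Nat.succ_ne_zero 0)]; exact dist_nonneg
  · simp only [cDist, if_neg ht0.ne', if_neg (Nat.succ_ne_zero t)]
    exact hsorted t (t + 1) ht0 (Nat.le_succ t) ht

variable [DecidableEq X]

theorem Nset_subset {F : Finset X} (hmem : ∀ t : ℕ, 1 ≤ t → t ≤ n → π j t ∈ F) {T : ℕ}
    (hT : T ≤ n) : Nset π j T ⊆ F := by
  intro i hi
  obtain ⟨t, ht, rfl⟩ := mem_image.mp hi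
  exact hmem t (mem_Icc.mp ht).1 ((mem_Icc.mp ht).2.trans hT)

theorem dist_le_cDist_of_mem_Nset (hsorted : ∀ t t' : ℕ, 1 ≤ t → t ≤ t' → t' ≤ n →
      dist j (π j t) ≤ dist j (π j t')) {T : ℕ} (hT : T ≤ n) {i : X} (hi : i ∈ Nset π j T) :
    dist j i ≤ cDist π j T := by
  obtain ⟨t, ht, rfl⟩ := mem_image.mp hi
  obtain ⟨ht1, htT⟩ := mem_Icc.mp ht
  rw [cDist, if_neg (by omega)]
  exact hsorted t T ht1 htT hT

end FTFL

theorem ftfl_constant_approximation_general {X : Type*} [MetricSpace X] [DecidableEq X]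
    (F : Finset X) (n : ℕ)
    (f : X → ℝ) (hf : ∀ i ∈ F, 0 ≤ f i)
    (C : Finset X) (r : X → ℕ) (hr : ∀ j ∈ C, 1 ≤ r j ∧ r j ≤ n)
    (w : X → ℝ) (hw : ∀ j ∈ C, 0 < w j)
    (π : X → ℕ → X)
    (hπmem : ∀ j ∈ C, ∀ t : ℕ, 1 ≤ t → t ≤ n → π j t ∈ F)
    (hπsorted : ∀ j ∈ C, ∀ t t' : ℕ, 1 ≤ t → t ≤ t' → t' ≤ n →
      dist j (π j t) ≤ dist j (π j t'))
    (y : X → ℝ) (x : X → X → ℝ) (z : X → ℕ → ℝ)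
    (hy : ∀ i ∈ F, 0 ≤ y i ∧ y i ≤ 1)
    (hz : ∀ j ∈ C, ∀ t : ℕ, t ≤ n → 0 ≤ z j t ∧ z j t ≤ 1)
    (hxy : ∀ i ∈ F, ∀ j ∈ C, x i j ≤ y i)
    (hkc : ∀ j ∈ C, ∀ t : ℕ, 1 ≤ t → t ≤ n → ∀ A ⊆ Nset π j t,
      ((r j : ℝ) - (A.card : ℝ)) * z j t ≤ ∑ i ∈ Nset π j t \ A, x i j)
    (hz0 : ∀ j ∈ C, z j 0 = 0)
    (hzn : ∀ j ∈ C, z j n = 1) :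
    ∃ S ⊆ F, (∀ j ∈ C, r j ≤ S.card) ∧
      (∑ i ∈ S, f i) +
        (∑ j ∈ C, w j * (((S.val.map fun i => dist j i).sort (· ≤ ·)).getD (r j - 1) 0))
      ≤ 3.16 * ((∑ i ∈ F, f i * y i) +
        ∑ j ∈ C, w j * ∑ t ∈ Finset.range n,
          (1 - z j t) * (cDist π j (t + 1) - cDist π j t)) := by
  obtain ⟨β, hβ, hβ1, hβcost⟩ := exists_threshold_le (c := cDist π) (fun j hj => (hw j hj).le)
    (fun _ _ => cDist_zero) (fun j hj _ => cDist_le_succ (hπsorted j hj))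
    (fun j hj t ht => (hz j hj t ht.le).2) (sum_nonneg fun i hi => mul_nonneg (hf i hi) (hy i hi).1)
  have hβ0 : 0 < β := by linarith
  set τ := fun j => threshold (z j) n β
  have hNF : ∀ j ∈ C, Nset π j (τ j) ⊆ F := fun j hj => Nset_subset (hπmem j hj) threshold_le
  have hmass : ∀ j ∈ C, (r j : ℝ) ≤ ∑ i ∈ Nset π j (τ j), min (y i / β) 1 := fun j hj =>
    le_sum_min_div_of_knapsackCover hβ0 (le_apply_threshold (hzn j hj ▸ hβ1))
      (fun i hi => (hy i (hNF j hj hi)).1) (fun i hi => hxy i (hNF j hj hi) j hj)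
      (hkc j hj _ (threshold_pos (by rw [hz0 j hj]; exact hβ0) (hzn j hj ▸ hβ1)) threshold_le)
  obtain ⟨S, hSF, hScost, hScover⟩ := exists_integral_rounding hf
    (fun i hi => le_min (div_nonneg (hy i hi).1 hβ0.le) zero_le_one) (fun i _ => min_le_right _ _)
    hNF (fun j hj i hi => dist_le_cDist_of_mem_Nset (hπsorted j hj) threshold_le hi) hmass
  refine ⟨S, hSF, fun j hj => (hScover j hj).trans (card_filter_le _ _),
    (add_le_add ?_ ?_).trans hβcost⟩
  · refine hScost.trans ?_
    rw [sum_div]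
    exact sum_le_sum fun i hi => by
      rw [mul_div_assoc]; exact mul_le_mul_of_nonneg_left (min_le_left _ _) (hf i hi)
  · rw [mul_sum]
    exact sum_le_sum fun j hj => by
      rw [mul_left_comm]
      exact mul_le_mul_of_nonneg_left
        (sort_map_getD_le_of_le_card_filter S _ (hr j hj).1 (hScover j hj)) (hw j hj).le

/-- The `3.16`-approximation for fault-tolerant facility location via the
knapsack-cover-strengthened LP: for every feasible solution `(x, y, z)` of the strengthened
LP relaxation, there exists a feasible set `S ⊆ F` of facilities whose total cost (opening
costs plus each client's weight times the distance to its `r_j`-th closest open facility) is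
at most `3.16` times the LP objective.  Here `π j` enumerates `F` in nondecreasing order of
distance to `j`; `z j 0 = 0` is the knapsack-cover constraint at `t = 0` (with `N(j,0) = ∅`
and `r_j ≥ 1`). -/
theorem ftfl_constant_approximation {X : Type*} [MetricSpace X] [DecidableEq X]
    (F : Finset X) (n : ℕ) (hcard : F.card = n) (hn : 1 ≤ n)
    (f : X → ℝ) (hf : ∀ i ∈ F, 0 ≤ f i)
    (C : Finset X) (r : X → ℕ) (hr : ∀ j ∈ C, 1 ≤ r j ∧ r j ≤ n)
    (w : X → ℝ) (hw : ∀ j ∈ C, 0 < w j)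
    (π : X → ℕ → X)
    (hπmem : ∀ j ∈ C, ∀ t : ℕ, 1 ≤ t → t ≤ n → π j t ∈ F)
    (hπinj : ∀ j ∈ C, ∀ t t' : ℕ, 1 ≤ t → t ≤ n → 1 ≤ t' → t' ≤ n →
      π j t = π j t' → t = t')
    (hπsorted : ∀ j ∈ C, ∀ t t' : ℕ, 1 ≤ t → t ≤ t' → t' ≤ n →
      dist j (π j t) ≤ dist j (π j t'))
    (y : X → ℝ) (x : X → X → ℝ) (z : X → ℕ → ℝ)
    (hy : ∀ i ∈ F, 0 ≤ y i ∧ y i ≤ 1)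
    (hx : ∀ i ∈ F, ∀ j ∈ C, 0 ≤ x i j ∧ x i j ≤ 1)
    (hz : ∀ j ∈ C, ∀ t : ℕ, t ≤ n → 0 ≤ z j t ∧ z j t ≤ 1)
    (hserve : ∀ j ∈ C, (r j : ℝ) ≤ ∑ i ∈ F, x i j)
    (hxy : ∀ i ∈ F, ∀ j ∈ C, x i j ≤ y i)
    (hkc : ∀ j ∈ C, ∀ t : ℕ, 1 ≤ t → t ≤ n → ∀ A ⊆ Nset π j t,
      ((r j : ℝ) - (A.card : ℝ)) * z j t ≤ ∑ i ∈ Nset π j t \ A, x i j)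
    (hz0 : ∀ j ∈ C, z j 0 = 0)
    (hzn : ∀ j ∈ C, z j n = 1) :
    ∃ S ⊆ F, (∀ j ∈ C, r j ≤ S.card) ∧
      (∑ i ∈ S, f i) +
        (∑ j ∈ C, w j * (((S.val.map fun i => dist j i).sort (· ≤ ·)).getD (r j - 1) 0))
      ≤ 3.16 * ((∑ i ∈ F, f i * y i) +
        ∑ j ∈ C, w j * ∑ t ∈ Finset.range n,
          (1 - z j t) * (cDist π j (t + 1) - cDist π j t)) :=
  ftfl_constant_approximation_general F n f hf C r hr w hw π hπmem hπsorted y x z hy hz hxy hkc hz0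
    hzn
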